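/- Let (Z, μ) be a finite measure space, let B be a positive natural number, and for each b ∈ Fin B let F_b : Z → ℝ be a measurable, nonnegative, μ-integrable function. Define V(α) = ∫_Z min_{b ∈ Fin B} (α_b · F_b(ω)) dμ(ω). Then for all α, α' with nonnegative entries, |V(α) − V(α')| ≤ (max_{b ∈ Fin B} |α_b − α'_b|) · ∑_{b ∈ Fin B} ∫_Z F_b dμ; in particular V is Lipschitz continuous (hence continuous) on the nonnegative orthant of Fin B → ℝ. -/

import Mathlib

/-! A finite minimum of reals is 1-Lipschitz for the sup norm, so pointwise
`|min_b α_b F_b − min_b α'_b F_b| ≤ max_b (|α_b − α'_b| F_b) ≤ max_b |α_b − α'_b| ∑_b F_b`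
when `F ≥ 0`; integrating this bound gives the estimate. -/

open MeasureTheory

/-- The optimal value of the region partitioning problem at weight vector `α`:
`V(α) = ∫_Z min_b (α_b · F_b ω) dμ(ω)`. -/
noncomputable def partitionValue {Z : Type*} [MeasurableSpace Z] (μ : Measure Z)
    {B : ℕ} (hB : 0 < B) (F : Fin B → Z → ℝ) (α : Fin B → ℝ) : ℝ :=
  ∫ ω, Finset.univ.inf'
      (⟨⟨0, hB⟩, Finset.mem_univ _⟩ : (Finset.univ : Finset (Fin B)).Nonempty)
      (fun b => α b * F b ω) ∂μ

namespace Finset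

variable {ι : Type*} {s : Finset ι} (hs : s.Nonempty)

theorem inf'_sub_inf'_le_sup'_abs_sub (f g : ι → ℝ) :
    s.inf' hs f - s.inf' hs g ≤ s.sup' hs (fun i => |f i - g i|) := by
  rw [sub_le_comm]
  refine le_inf' hs g fun i hi => ?_
  have hf : s.inf' hs f ≤ f i := inf'_le f hi
  have hfg : |f i - g i| ≤ s.sup' hs (fun i => |f i - g i|) := le_sup' (fun i => |f i - g i|) hi
  linarith [le_abs_self (f i - g i)]

theorem abs_inf'_sub_inf'_le_sup'_abs_sub (f g : ι → ℝ) :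
    |s.inf' hs f - s.inf' hs g| ≤ s.sup' hs (fun i => |f i - g i|) := by
  refine abs_sub_le_iff.2 ⟨inf'_sub_inf'_le_sup'_abs_sub hs f g, ?_⟩
  simpa only [abs_sub_comm] using inf'_sub_inf'_le_sup'_abs_sub hs g f

theorem abs_inf'_mul_sub_inf'_mul_le {a a' x : ι → ℝ} (hx : ∀ i ∈ s, 0 ≤ x i) :
    |s.inf' hs (fun i => a i * x i) - s.inf' hs (fun i => a' i * x i)|
      ≤ s.sup' hs (fun i => |a i - a' i|) * ∑ i ∈ s, x i := by
  refine (abs_inf'_sub_inf'_le_sup'_abs_sub hs _ _).trans (sup'_le hs _ fun i hi => ?_)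
  have ha : |a i - a' i| ≤ s.sup' hs (fun i => |a i - a' i|) := le_sup' (fun i => |a i - a' i|) hi
  calc |a i * x i - a' i * x i| = |a i - a' i| * x i := by
        rw [← sub_mul, abs_mul, abs_of_nonneg (hx i hi)]
    _ ≤ s.sup' hs (fun i => |a i - a' i|) * ∑ i ∈ s, x i :=
        mul_le_mul ha (single_le_sum hx hi) (hx i hi) ((abs_nonneg _).trans ha)

end Finset

theorem MeasureTheory.Integrable.finset_inf' {Z ι : Type*} [MeasurableSpace Z] {μ : Measure Z}
    {s : Finset ι} (hs : s.Nonempty) {g : ι → Z → ℝ} (hg : ∀ i ∈ s, Integrable (g i) μ) :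
    Integrable (fun ω => s.inf' hs (fun i => g i ω)) μ := by
  rw [show (fun ω => s.inf' hs fun i => g i ω) = s.inf' hs g from
    funext fun ω => (Finset.inf'_apply hs g ω).symm]
  exact Finset.inf'_induction hs g (p := (Integrable · μ)) (fun _ h₁ _ h₂ => h₁.inf h₂) hg

theorem partitionValue_lipschitz_general
    {Z : Type*} [MeasurableSpace Z] (μ : Measure Z)
    (B : ℕ) (hB : 0 < B) (F : Fin B → Z → ℝ)
    (hnonneg : ∀ b, ∀ ω, 0 ≤ F b ω)
    (hint : ∀ b, Integrable (F b) μ) :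
    ∀ α α' : Fin B → ℝ, (∀ b, 0 ≤ α b) → (∀ b, 0 ≤ α' b) →
      |partitionValue μ hB F α - partitionValue μ hB F α'|
        ≤ (Finset.univ.sup'
              (⟨⟨0, hB⟩, Finset.mem_univ _⟩ : (Finset.univ : Finset (Fin B)).Nonempty)
              (fun b => |α b - α' b|))
          * ∑ b, ∫ ω, F b ω ∂μ := by
  intro α α' _ _
  set hne : (Finset.univ : Finset (Fin B)).Nonempty := ⟨⟨0, hB⟩, Finset.mem_univ _⟩
  set M := Finset.univ.sup' hne (fun b => |α b - α' b|)
  have hV : ∀ a : Fin B → ℝ, Integrable (fun ω => Finset.univ.inf' hne (fun b => a b * F b ω)) μ :=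
    fun a => Integrable.finset_inf' hne fun b _ => (hint b).const_mul (a b)
  have hbound : Integrable (fun ω => M * ∑ b, F b ω) μ :=
    (integrable_finsetSum _ fun b _ => hint b).const_mul M
  calc |partitionValue μ hB F α - partitionValue μ hB F α'|
      = ‖∫ ω, (Finset.univ.inf' hne (fun b => α b * F b ω)
          - Finset.univ.inf' hne (fun b => α' b * F b ω)) ∂μ‖ := by
        rw [integral_sub (hV α) (hV α'), Real.norm_eq_abs]; rfl
    _ ≤ ∫ ω, M * ∑ b, F b ω ∂μ :=
        norm_integral_le_of_norm_le hbound <| ae_of_all _ fun ω =>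
          Finset.abs_inf'_mul_sub_inf'_mul_le hne fun b _ => hnonneg b ω
    _ = M * ∑ b, ∫ ω, F b ω ∂μ := by
        rw [integral_const_mul, integral_finsetSum _ fun b _ => hint b]

/-- **Lipschitz continuity of the value function.** For weight vectors `α, α'` with
nonnegative entries, `|V(α) − V(α')| ≤ (max_b |α_b − α'_b|) · ∑_b ∫_Z F_b dμ`. -/
theorem partitionValue_lipschitz
    {Z : Type*} [MeasurableSpace Z] (μ : Measure Z) [IsFiniteMeasure μ]
    (B : ℕ) (hB : 0 < B) (F : Fin B → Z → ℝ)
    (hmeas : ∀ b, Measurable (F b))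
    (hnonneg : ∀ b, ∀ ω, 0 ≤ F b ω)
    (hint : ∀ b, Integrable (F b) μ) :
    ∀ α α' : Fin B → ℝ, (∀ b, 0 ≤ α b) → (∀ b, 0 ≤ α' b) →
      |partitionValue μ hB F α - partitionValue μ hB F α'|
        ≤ (Finset.univ.sup'
              (⟨⟨0, hB⟩, Finset.mem_univ _⟩ : (Finset.univ : Finset (Fin B)).Nonempty)
              (fun b => |α b - α' b|))
          * ∑ b, ∫ ω, F b ω ∂μ :=
  partitionValue_lipschitz_general μ B hB F hnonneg hint
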